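/- arXiv:2511.03157 — 4 statements merged into one kernel-verified Lean document; each statement's English description precedes it below -/
import Mathlib

section
/- Let f : ℕ → ℝ be a density function (f(i) ≤ C(i,2) for all i) and define g_f(i) = C(i,2) - f(i). If g_f is monotonically non-increasing (g_f(i) ≥ g_f(i+1) for all i ≥ 0), then for every finite simple graph G with n vertices and at least f(n) edges, every induced subgraph of G on k vertices has at least f(k) edges. -/
open Finset

/-- Number of edges of `G` with both endpoints in `S` (edge count of the induced subgraph). -/
noncomputable def edgeCount {V : Type} (G : SimpleGraph V) (S : Finset V) : ℕ :=
  {e : Sym2 V | e ∈ G.edgeSet ∧ ∀ x ∈ e, x ∈ S}.ncard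

/-- Number of non-edges (missing edges) among the vertices of `S`. -/
noncomputable def nonEdgeCount {V : Type} (G : SimpleGraph V) (S : Finset V) : ℕ :=
  edgeCount Gᶜ S

/-- The induced subgraph `G[S]` has diameter at most 2: every two distinct vertices of `S`
are adjacent or joined by a path of length 2 inside `S`. -/
def diamLE2 {V : Type} (G : SimpleGraph V) (S : Finset V) : Prop :=
  ∀ u ∈ S, ∀ v ∈ S, u ≠ v → G.Adj u v ∨ ∃ w ∈ S, G.Adj u w ∧ G.Adj w v

/-- Two-hop neighborhood of `v` in `G`: vertices reachable from `v` within two edges. -/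
def twoHop {V : Type} (G : SimpleGraph V) (v : V) : Set V :=
  {u | G.Adj v u ∨ ∃ w, G.Adj v w ∧ G.Adj w u}

/-- `g_f(i) = C(i,2) - f(i)`. -/
def gf (f : ℕ → ℝ) (i : ℕ) : ℝ := (i.choose 2 : ℝ) - f i

lemma edgeCount_eq_image {V : Type} (G : SimpleGraph V) (S : Finset V) :
    {e : Sym2 V | e ∈ G.edgeSet ∧ ∀ x ∈ e, x ∈ S}
      = Sym2.map (Subtype.val : ↥(↑S : Set V) → V) '' (G.induce ↑S).edgeSet := by
  ext e
  constructor
  · rintro ⟨he, hmem⟩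
    induction e with
    | h x y =>
      have hx : x ∈ S := hmem x (by simp)
      have hy : y ∈ S := hmem y (by simp)
      refine ⟨s(⟨x, by simpa using hx⟩, ⟨y, by simpa using hy⟩), ?_, rfl⟩
      simpa [SimpleGraph.mem_edgeSet] using he
  · rintro ⟨e', he', rfl⟩
    induction e' with
    | h a b =>
      refine ⟨by simpa [SimpleGraph.mem_edgeSet] using he', ?_⟩
      intro x hx
      simp only [Sym2.map_pair_eq, Sym2.mem_iff] at hx
      rcases hx with rfl | rfl
      · simpa using a.2
      · simpa using b.2

lemma edgeCount_eq_induce {V : Type} (G : SimpleGraph V) (S : Finset V) :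
    edgeCount G S = (G.induce ↑S).edgeSet.ncard := by
  rw [edgeCount, edgeCount_eq_image,
    Set.ncard_image_of_injective _ (Sym2.map.injective Subtype.val_injective)]

lemma induce_compl {V : Type} (G : SimpleGraph V) (s : Set V) :
    Gᶜ.induce s = (G.induce s)ᶜ := by
  ext a b
  simp only [SimpleGraph.comap_adj, SimpleGraph.compl_adj]
  simp [Subtype.coe_ne_coe]

lemma edgeCount_add_compl {V : Type} [Fintype V] (H : SimpleGraph V) :
    H.edgeSet.ncard + Hᶜ.edgeSet.ncard = (Fintype.card V).choose 2 := by
  classical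
  have hdisj : Disjoint H.edgeSet Hᶜ.edgeSet := by
    rw [Set.disjoint_left]
    rintro e he he'
    induction e with
    | h x y =>
      simp only [SimpleGraph.mem_edgeSet, SimpleGraph.compl_adj] at he he'
      exact he'.2 he
  have hunion : H.edgeSet ∪ Hᶜ.edgeSet = (⊤ : SimpleGraph V).edgeSet := by
    rw [← SimpleGraph.edgeSet_sup, sup_compl_eq_top]
  have := Set.ncard_union_eq hdisj (Set.toFinite _) (Set.toFinite _)
  rw [hunion] at this
  rw [← this]
  have : (⊤ : SimpleGraph V).edgeSet.ncard = #(⊤ : SimpleGraph V).edgeFinset := by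
    simp [Set.ncard_eq_toFinset_card', SimpleGraph.edgeFinset]
  rw [this, SimpleGraph.card_edgeFinset_top_eq_card_choose_two]

lemma edgeCount_add_nonEdgeCount {V : Type} (G : SimpleGraph V) (S : Finset V) :
    edgeCount G S + nonEdgeCount G S = (S.card).choose 2 := by
  classical
  rw [nonEdgeCount, edgeCount_eq_induce, edgeCount_eq_induce, induce_compl]
  have h := edgeCount_add_compl (G.induce (↑S : Set V))
  simpa using h

theorem stmt0 (f : ℕ → ℝ) (hf : ∀ i, f i ≤ (i.choose 2 : ℝ))
    (hg : ∀ i, gf f (i + 1) ≤ gf f i)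
    {V : Type} [Fintype V] (G : SimpleGraph V)
    (hG : f (Fintype.card V) ≤ (edgeCount G Finset.univ : ℝ)) :
    ∀ S : Finset V, f S.card ≤ (edgeCount G S : ℝ) := by
  intro S
  have hanti : Antitone (gf f) := antitone_nat_of_succ_le hg
  have hcard : S.card ≤ Fintype.card V := S.card_le_univ
  have hgf : gf f (Fintype.card V) ≤ gf f S.card := hanti hcard
  have hmono : nonEdgeCount G S ≤ nonEdgeCount G Finset.univ := by
    apply Set.ncard_le_ncard _ (Set.toFinite _)
    rintro e ⟨he, hm⟩
    exact ⟨he, fun x _ => Finset.mem_univ x⟩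
  have h1 := edgeCount_add_nonEdgeCount G S
  have h2 := edgeCount_add_nonEdgeCount G Finset.univ
  rw [Finset.card_univ] at h2
  have h1' : (edgeCount G S : ℝ) + nonEdgeCount G S = ((S.card).choose 2 : ℝ) := by
    exact_mod_cast congrArg (Nat.cast : ℕ → ℝ) h1
  have h2' : (edgeCount G Finset.univ : ℝ) + nonEdgeCount G Finset.univ
      = ((Fintype.card V).choose 2 : ℝ) := by
    exact_mod_cast congrArg (Nat.cast : ℕ → ℝ) h2
  have hmono' : (nonEdgeCount G S : ℝ) ≤ nonEdgeCount G Finset.univ := by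
    exact_mod_cast hmono
  simp only [gf] at hgf
  linarith
end

section
/- Let f : ℕ → ℝ be a density function and g_f(i) = C(i,2) - f(i). Suppose (1) there exists n₀ ≥ 2 with f(n₀) > 0, (2) g_f is monotonically non-decreasing, and (3) g_f is unbounded. Then there exists a graph G with at least f(|V(G)|) edges that has an induced subgraph H with fewer than f(|V(H)|) edges; i.e., the f-dense property is not hereditary. -/
open Finset

lemma edgeCount_univ' {n : ℕ} (G : SimpleGraph (Fin n)) :
    edgeCount G Finset.univ = G.edgeSet.ncard := by
  unfold edgeCount; congr 1; ext e; simp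

lemma edgeSet_map' {V W : Type} (f : V ↪ W) (G : SimpleGraph V) :
    (G.map f).edgeSet = Sym2.map f '' G.edgeSet := by
  ext e
  induction e with
  | _ u v =>
    simp only [SimpleGraph.mem_edgeSet, SimpleGraph.map_adj, Set.mem_image]
    constructor
    · rintro ⟨a, b, hab, rfl, rfl⟩
      exact ⟨s(a, b), hab, rfl⟩
    · rintro ⟨e', he', h⟩
      induction e' with
      | _ a b =>
        rw [Sym2.map_pair_eq, Sym2.eq_iff] at h
        rcases h with ⟨rfl, rfl⟩ | ⟨rfl, rfl⟩
        · exact ⟨a, b, he', rfl, rfl⟩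
        · exact ⟨b, a, (SimpleGraph.mem_edgeSet _).1 ((Sym2.eq_swap ▸ he' : _)), rfl, rfl⟩

lemma ncard_edgeSet_top (n : ℕ) :
    (⊤ : SimpleGraph (Fin n)).edgeSet.ncard = n.choose 2 := by
  classical
  rw [Set.ncard_eq_toFinset_card']
  have h := SimpleGraph.card_edgeFinset_top_eq_card_choose_two (V := Fin n)
  simp only [SimpleGraph.edgeFinset] at h
  rw [Set.toFinset_card] at h ⊢
  simpa using h

theorem stmt1 (f : ℕ → ℝ) (hf : ∀ i, f i ≤ (i.choose 2 : ℝ))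
    (hpos : ∃ n₀, 2 ≤ n₀ ∧ 0 < f n₀)
    (hmono : ∀ i, gf f i ≤ gf f (i + 1))
    (hunb : ∀ c : ℝ, ∃ n, c ≤ gf f n) :
    ∃ (n : ℕ) (G : SimpleGraph (Fin n)) (S : Finset (Fin n)),
      f n ≤ (edgeCount G Finset.univ : ℝ) ∧ (edgeCount G S : ℝ) < f S.card := by
  classical
  obtain ⟨n₀, hn₀2, hn₀pos⟩ := hpos
  obtain ⟨n₁, hn₁⟩ := hunb (n₀.choose 2 : ℝ)
  set n := max n₁ n₀ with hn
  have hle : n₀ ≤ n := le_max_right _ _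
  have hm : Monotone (gf f) := monotone_nat_of_le_succ hmono
  have hgfn : (n₀.choose 2 : ℝ) ≤ gf f n := le_trans hn₁ (hm (le_max_left _ _))
  set emb : Fin n₀ ↪ Fin n := Fin.castLEEmb hle with hemb
  set K : SimpleGraph (Fin n) := (⊤ : SimpleGraph (Fin n₀)).map emb with hK
  refine ⟨n, Kᶜ, Finset.univ.map emb, ?_, ?_⟩
  · -- the big graph is dense
    have hKcard : K.edgeSet.ncard = n₀.choose 2 := by
      rw [hK, edgeSet_map', Set.ncard_image_of_injective _ (Sym2.map.injective emb.injective),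
        ncard_edgeSet_top]
    have hsum : K.edgeSet.ncard + Kᶜ.edgeSet.ncard = n.choose 2 := by
      rw [← Set.ncard_union_eq (SimpleGraph.disjoint_edgeSet.2 disjoint_compl_right)
        (Set.toFinite _) (Set.toFinite _), ← SimpleGraph.edgeSet_sup, sup_compl_eq_top,
        ncard_edgeSet_top]
    rw [edgeCount_univ']
    have : (Kᶜ.edgeSet.ncard : ℝ) = (n.choose 2 : ℝ) - (n₀.choose 2 : ℝ) := by
      rw [← hKcard]
      have := hsum
      push_cast [← this, hKcard]
      ring
    rw [this]
    have : f n = (n.choose 2 : ℝ) - gf f n := by simp [gf]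
    linarith
  · -- the induced subgraph on the n₀ "hole" vertices has no edges
    have hcard : (Finset.univ.map emb).card = n₀ := by simp
    have hempty : {e : Sym2 (Fin n) | e ∈ Kᶜ.edgeSet ∧ ∀ x ∈ e, x ∈ Finset.univ.map emb} = ∅ := by
      ext e
      induction e with
      | _ u v =>
        simp only [Set.mem_setOf_eq, Set.mem_empty_iff_false, iff_false, not_and]
        intro hadj hmem
        obtain ⟨a, -, ha⟩ := Finset.mem_map.1 (hmem u (by simp))
        obtain ⟨b, -, hb⟩ := Finset.mem_map.1 (hmem v (by simp))
        rw [SimpleGraph.mem_edgeSet, SimpleGraph.compl_adj] at hadj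
        exact hadj.2 ((SimpleGraph.map_adj emb ⊤ u v).2 ⟨a, b, by rintro rfl; exact hadj.1 (ha ▸ hb ▸ rfl), ha, hb⟩)
    have : edgeCount Kᶜ (Finset.univ.map emb) = 0 := by
      rw [edgeCount, hempty, Set.ncard_empty]
    rw [this, hcard]
    exact_mod_cast hn₀pos
end

section
/- Let G = (V,E), f a density function with g_f(i) = C(i,2) - f(i), S ⊆ V, C ⊆ V ∖ S, and for v ∈ C let w_S(v) = |S ∖ N_G(v)| be the number of non-neighbors of v in S. Order C as v₁,…,v_{|C|} with w_S non-decreasing, and for k ≤ |C| let W_k = Σ_{j=1}^{k} w_S(v_j). Let k* be the largest k with W_k + |Ē(S)| ≤ g_f(|S| + k), where |Ē(S)| = C(|S|,2) - |E(S)|. Then for every f-dense set S* with S ⊆ S* ⊆ S ∪ C, we have |S*| ≤ |S| + k*. -/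
open Finset

noncomputable def ec {V : Type} (G : SimpleGraph V) (S : Finset V) : ℕ :=
  (@Finset.filter _ (fun e => e ∈ G.edgeSet) (fun _ => Classical.propDecidable _) S.sym2).card

lemma edgeCount_eq {V : Type} [Fintype V] (G : SimpleGraph V) (S : Finset V) :
    edgeCount G S = ec G S := by
  rw [edgeCount, ec, ← Set.ncard_coe_finset]
  congr 1
  ext e
  simp [Finset.mem_sym2_iff, and_comm]

lemma edge_nonedge_count {V : Type} [Fintype V] [DecidableEq V] (G : SimpleGraph V)
    (S : Finset V) : ec G S + ec Gᶜ S = S.card.choose 2 := by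
  classical
  set A := S.sym2.filter (fun e => e ∈ G.edgeSet) with hA
  set B := S.sym2.filter (fun e => e ∈ Gᶜ.edgeSet) with hB
  have hmemA : ∀ e, e ∈ A ↔ e ∈ S.sym2 ∧ e ∈ G.edgeSet := fun e => Finset.mem_filter
  have hmemB : ∀ e, e ∈ B ↔ e ∈ S.sym2 ∧ e ∈ Gᶜ.edgeSet := fun e => Finset.mem_filter
  have hdisj2 : Disjoint A B := by
    rw [Finset.disjoint_left]
    intro e heA heB
    obtain ⟨-, h1⟩ := (hmemA e).mp heA
    obtain ⟨-, h2⟩ := (hmemB e).mp heB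
    induction e with
    | _ a b =>
      simp only [SimpleGraph.mem_edgeSet, SimpleGraph.compl_adj] at h1 h2
      exact h2.2 h1
  have hu : A ∪ B = S.sym2.filter (fun e => ¬ e.IsDiag) := by
    ext e
    rw [Finset.mem_union, hmemA, hmemB, Finset.mem_filter, ← and_or_left]
    apply and_congr_right
    intro he
    induction e with
    | _ a b =>
      simp only [SimpleGraph.mem_edgeSet, SimpleGraph.compl_adj, Sym2.isDiag_iff_proj_eq]
      constructor
      · rintro (h | h)
        · exact h.ne
        · exact h.1
      · intro h
        by_cases hab : G.Adj a b
        · exact Or.inl hab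
        · exact Or.inr ⟨h, hab⟩
  have hcu : (A ∪ B).card = A.card + B.card := Finset.card_union_of_disjoint hdisj2
  rw [hu] at hcu
  have hdiag : (S.sym2.filter (fun e => e.IsDiag)).card = S.card := by
    have h3 : S.sym2.filter (fun e => e.IsDiag) = S.image Sym2.diag := by
      ext e
      induction e with
      | _ a b =>
        simp only [Finset.mem_filter, Finset.mk_mem_sym2_iff, Finset.mem_image,
          Sym2.isDiag_iff_proj_eq]
        constructor
        · rintro ⟨⟨ha, hb⟩, rfl⟩; exact ⟨a, ha, rfl⟩
        · rintro ⟨x, hx, he⟩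
          rw [Sym2.diag] at he
          obtain ⟨rfl, rfl⟩ | ⟨rfl, rfl⟩ := Sym2.eq_iff.mp he.symm <;> exact ⟨⟨hx, hx⟩, rfl⟩
    rw [h3, Finset.card_image_of_injective _ Sym2.diag_injective]
  have h2 : (S.sym2.filter (fun e => e.IsDiag)).card
      + (S.sym2.filter (fun e => ¬ e.IsDiag)).card = S.sym2.card :=
    Finset.card_filter_add_card_filter_not _
  have hfin : A.card + B.card = S.card.choose 2 := by
    rw [Finset.card_sym2, Nat.choose_succ_succ, Nat.choose_one_right] at h2
    have : Nat.succ 1 = 2 := rfl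
    rw [this] at h2
    omega
  have e1 : ec G S = A.card := by
    rw [ec]; congr 1; ext e
    simp only [Finset.mem_filter, hA]
  have e2 : ec Gᶜ S = B.card := by
    rw [ec]; congr 1; ext e
    simp only [Finset.mem_filter, hB]
  rw [e1, e2]; exact hfin

lemma ec_eq_filter {V : Type} (G : SimpleGraph V) (S : Finset V)
    [inst : DecidablePred (· ∈ G.edgeSet)] :
    ec G S = (S.sym2.filter (fun e => e ∈ G.edgeSet)).card := by
  rw [ec]; congr 1; ext e; simp only [Finset.mem_filter]

lemma key_ineq {V : Type} [Fintype V] [DecidableEq V] (G : SimpleGraph V) [DecidableRel G.Adj]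
    (S T : Finset V) (hST : S ⊆ T) :
    ec Gᶜ S + ∑ x ∈ T \ S, (S.filter fun y => ¬ G.Adj x y).card ≤ ec Gᶜ T := by
  classical
  set A := S.sym2.filter (fun e => e ∈ Gᶜ.edgeSet) with hA
  set B := (T \ S).biUnion
    (fun x => (S.filter fun y => ¬ G.Adj x y).image (fun y => s(x, y))) with hB
  have hBcard : B.card = ∑ x ∈ T \ S, (S.filter fun y => ¬ G.Adj x y).card := by
    rw [hB, Finset.card_biUnion]
    · apply Finset.sum_congr rfl
      intro x hx
      apply Finset.card_image_of_injOn
      intro y hy y' hy' he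
      simp only [Sym2.eq_iff] at he
      obtain ⟨-, rfl⟩ | ⟨h1, h2⟩ := he
      · rfl
      · exact h2.trans h1
    · intro x hx x' hx' hne
      rw [Function.onFun, Finset.disjoint_left]
      rintro e he he'
      simp only [Finset.mem_image, Finset.mem_filter] at he he'
      obtain ⟨y, ⟨hyS, -⟩, rfl⟩ := he
      obtain ⟨y', ⟨hy'S, -⟩, he'⟩ := he'
      simp only [Sym2.eq_iff] at he'
      obtain ⟨h1, -⟩ | ⟨h1, h2⟩ := he'
      · exact hne h1.symm
      · exact (Finset.mem_sdiff.mp hx).2 (h2 ▸ hy'S)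
  have hdisjAB : Disjoint A B := by
    rw [Finset.disjoint_left]
    intro e heA heB
    rw [hA, Finset.mem_filter, Finset.mem_sym2_iff] at heA
    simp only [hB, Finset.mem_biUnion, Finset.mem_image, Finset.mem_filter] at heB
    obtain ⟨x, hx, y, -, rfl⟩ := heB
    exact (Finset.mem_sdiff.mp hx).2 (heA.1 x (Sym2.mem_mk_left x y))
  have hsub : A ∪ B ⊆ T.sym2.filter (fun e => e ∈ Gᶜ.edgeSet) := by
    intro e he
    rw [Finset.mem_union] at he
    obtain he | he := he
    · rw [hA, Finset.mem_filter] at he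
      rw [Finset.mem_filter]
      exact ⟨Finset.sym2_mono hST he.1, he.2⟩
    · simp only [hB, Finset.mem_biUnion, Finset.mem_image, Finset.mem_filter] at he
      obtain ⟨x, hx, y, ⟨hyS, hnadj⟩, rfl⟩ := he
      rw [Finset.mem_filter, Finset.mk_mem_sym2_iff]
      refine ⟨⟨(Finset.mem_sdiff.mp hx).1, hST hyS⟩, ?_⟩
      rw [SimpleGraph.mem_edgeSet, SimpleGraph.compl_adj]
      exact ⟨fun h => (Finset.mem_sdiff.mp hx).2 (h ▸ hyS), hnadj⟩
  have hle : A.card + B.card ≤ (T.sym2.filter (fun e => e ∈ Gᶜ.edgeSet)).card := by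
    rw [← Finset.card_union_of_disjoint hdisjAB]
    exact Finset.card_le_card hsub
  have e1 : ec Gᶜ S = A.card := by
    rw [ec]; congr 1; ext e; simp only [Finset.mem_filter, hA]
  have e2 : ec Gᶜ T = (T.sym2.filter (fun e => e ∈ Gᶜ.edgeSet)).card := by
    rw [ec]; congr 1; ext e; simp only [Finset.mem_filter]
  rw [e1, e2, ← hBcard]
  exact hle

lemma strictMono_le_apply {k c : ℕ} (g : Fin k → Fin c) (hg : StrictMono g) :
    ∀ (n : ℕ) (h : n < k), n ≤ (g ⟨n, h⟩ : ℕ) := by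
  intro n
  induction n with
  | zero => intro h; exact Nat.zero_le _
  | succ m ih =>
    intro h
    have h1 : m < k := Nat.lt_of_succ_lt h
    have h2 : g ⟨m, h1⟩ < g ⟨m + 1, h⟩ := hg (by simp [Fin.lt_def])
    have := ih h1
    rw [Fin.lt_def] at h2
    omega

lemma prefix_min {c : ℕ} (u : Fin c → ℕ) (hmono : Monotone u)
    {k : ℕ} (J : Finset (Fin c)) (hJ : J.card = k) :
    ∑ j ∈ Finset.univ.filter (fun j : Fin c => (j : ℕ) < k), u j ≤ ∑ j ∈ J, u j := by
  have hkc : k ≤ c := by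
    rw [← hJ]
    simpa using Finset.card_le_card (Finset.subset_univ J)
  have h1 : ∑ j ∈ J, u j = ∑ i : Fin k, u (J.orderEmbOfFin hJ i) :=
    (Finset.sum_bij (fun i _ => J.orderEmbOfFin hJ i)
      (fun i _ => J.orderEmbOfFin_mem hJ i)
      (fun i _ i' _ h => (J.orderEmbOfFin hJ).injective h)
      (fun x hx => by
        have : x ∈ Set.range (J.orderEmbOfFin hJ) := by
          rw [Finset.range_orderEmbOfFin]; exact hx
        obtain ⟨i, hi⟩ := this
        exact ⟨i, Finset.mem_univ i, hi⟩)
      (fun i _ => rfl)).symm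
  have h2 : ∑ j ∈ Finset.univ.filter (fun j : Fin c => (j : ℕ) < k), u j
      = ∑ i : Fin k, u (Fin.castLE hkc i) := by
    apply Finset.sum_bij (fun (j : Fin c) (hj : j ∈ Finset.univ.filter (fun j : Fin c => (j : ℕ) < k)) =>
      (⟨(j : ℕ), (Finset.mem_filter.mp hj).2⟩ : Fin k))
    · intro j hj; exact Finset.mem_univ _
    · intro j hj j' hj' h
      apply Fin.ext
      simpa [Fin.ext_iff] using h
    · intro i _
      refine ⟨Fin.castLE hkc i, Finset.mem_filter.mpr ⟨Finset.mem_univ _, i.2⟩, ?_⟩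
      apply Fin.ext; rfl
    · intro j hj
      rfl
  rw [h1, h2]
  apply Finset.sum_le_sum
  intro i _
  apply hmono
  rw [Fin.le_def]
  exact strictMono_le_apply _ (J.orderEmbOfFin hJ).strictMono (i : ℕ) i.2

theorem stmt11 (f : ℕ → ℝ) (hf : ∀ i, f i ≤ (i.choose 2 : ℝ))
    {V : Type} [Fintype V] [DecidableEq V] (G : SimpleGraph V) [DecidableRel G.Adj]
    (S C : Finset V) (hdisj : Disjoint S C)
    (w : V → ℕ) (hw : ∀ v, w v = (S.filter fun x => ¬ G.Adj v x).card)
    (c : ℕ) (hc : c = C.card) (v : Fin c → V)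
    (hvinj : Function.Injective v) (hvC : ∀ j, v j ∈ C)
    (hsorted : ∀ j j' : Fin c, j ≤ j' → w (v j) ≤ w (v j'))
    (W : ℕ → ℕ)
    (hW : ∀ k, W k = ∑ j ∈ Finset.univ.filter (fun j : Fin c => (j : ℕ) < k), w (v j))
    (kstar : ℕ) (hk1 : kstar ≤ c)
    (hk2 : (W kstar + nonEdgeCount G S : ℝ) ≤ gf f (S.card + kstar))
    (hk3 : ∀ k ≤ c, (W k + nonEdgeCount G S : ℝ) ≤ gf f (S.card + k) → k ≤ kstar) :
    ∀ T : Finset V, S ⊆ T → T ⊆ S ∪ C → f T.card ≤ (edgeCount G T : ℝ) →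
      T.card ≤ S.card + kstar := by
  intro T hST hTSC hdense
  classical
  set D := T \ S with hD
  have hDC : D ⊆ C := by
    intro x hx
    obtain ⟨hxT, hxS⟩ := Finset.mem_sdiff.mp hx
    rcases Finset.mem_union.mp (hTSC hxT) with h | h
    · exact absurd h hxS
    · exact h
  set k := D.card with hk
  have hkc2 : k ≤ c := hc ▸ Finset.card_le_card hDC
  have hTcard : T.card = S.card + k := by
    have h1 : D.card = T.card - S.card := by rw [hD]; exact Finset.card_sdiff_of_subset hST
    have h2 := Finset.card_le_card hST
    omega
  have himg : Finset.image v Finset.univ = C := by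
    apply Finset.eq_of_subset_of_card_le
    · intro x hx; obtain ⟨j, -, rfl⟩ := Finset.mem_image.mp hx; exact hvC j
    · rw [Finset.card_image_of_injective _ hvinj, Finset.card_univ, Fintype.card_fin, hc]
  set J := Finset.univ.filter (fun j => v j ∈ D) with hJdef
  have hmaps : ∀ j ∈ J, v j ∈ D := fun j hj => (Finset.mem_filter.mp hj).2
  have hinj : ∀ j ∈ J, ∀ j' ∈ J, v j = v j' → j = j' := fun j _ j' _ h => hvinj h
  have hsurj : ∀ x ∈ D, ∃ j, ∃ hj : j ∈ J, v j = x := by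
    intro x hx
    have hxC : x ∈ C := hDC hx
    rw [← himg] at hxC
    obtain ⟨j, -, rfl⟩ := Finset.mem_image.mp hxC
    exact ⟨j, Finset.mem_filter.mpr ⟨Finset.mem_univ _, hx⟩, rfl⟩
  have hJcard : J.card = k := by
    rw [hk]
    exact Finset.card_bij (fun j _ => v j) hmaps hinj hsurj
  have hsumJ : ∑ j ∈ J, w (v j) = ∑ x ∈ D, w x :=
    Finset.sum_bij (fun j _ => v j) hmaps hinj hsurj (fun j _ => rfl)
  have hWk : W k ≤ ∑ x ∈ D, w x := by
    rw [hW k, ← hsumJ]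
    exact prefix_min (fun j => w (v j)) (fun a b hab => hsorted a b hab) J hJcard
  have hkey : ec Gᶜ S + ∑ x ∈ D, w x ≤ ec Gᶜ T := by
    have h1 := key_ineq G S T hST
    have h2 : ∑ x ∈ D, w x = ∑ x ∈ T \ S, (S.filter fun y => ¬ G.Adj x y).card :=
      Finset.sum_congr rfl (fun x _ => hw x)
    rw [h2]
    exact h1
  have hcnt := edge_nonedge_count G T
  have hne1 : nonEdgeCount G S = ec Gᶜ S := by rw [nonEdgeCount, edgeCount_eq, ec_eq_filter]
  have hne2 : (W k : ℕ) + nonEdgeCount G S ≤ ec Gᶜ T := by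
    rw [hne1]
    omega
  have hgoal : (W k + nonEdgeCount G S : ℝ) ≤ gf f (S.card + k) := by
    have h2 : (ec Gᶜ T : ℝ) ≤ gf f T.card := by
      rw [gf]
      rw [edgeCount_eq] at hdense
      have hcnt' : (ec G T : ℝ) + (ec Gᶜ T : ℝ) = (T.card.choose 2 : ℝ) := by
        exact_mod_cast hcnt
      linarith
    rw [← hTcard]
    calc (W k + nonEdgeCount G S : ℝ) ≤ (ec Gᶜ T : ℝ) := by exact_mod_cast hne2
    _ ≤ gf f T.card := h2
  have hfin := hk3 k hkc2 hgoal
  rw [hTcard]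
  exact Nat.add_le_add_left hfin _
end

section
/- Let G = (V,E), S ⊆ V, C ⊆ V∖S. Suppose C is partitioned into independent sets Π_1,…,Π_χ, and each Π_i is further partitioned into sets R_i^1,…,R_i^{σ_i} such that any two distinct vertices in the same R_i^j are at distance greater than 2 in G[S∪C]. For each R_i^j pick u_{ij} ∈ R_i^j minimizing w_S(u) = |S∖N_G(u)|, and set w'_S(u_{ij}) = w_S(u_{ij}) + j - 1 (indices j ordered so that the minima w_S(u_{i1}) ≤ … ≤ w_S(u_{iσ_i})). Let C' = {u_{ij}}, sorted by w'_S non-decreasingly as u^{(1)},…,u^{(|C'|)}, and let k* be the largest k with |Ē(S)| + Σ_{t=1}^{k} w'_S(u^{(t)}) ≤ g_f(|S|+k). Then every set S* with S ⊆ S* ⊆ S∪C, |E(S*)| ≥ f(|S*|), and diam(G[S*]) ≤ 2 satisfies |S*| ≤ |S| + k*. -/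
open Finset

lemma edgeCount_eq_card {V : Type} [Fintype V] [DecidableEq V] (H : SimpleGraph V)
    [DecidableRel H.Adj] (T : Finset V) :
    edgeCount H T = (H.edgeFinset.filter (· ∈ T.sym2)).card := by
  rw [edgeCount, ← Set.ncard_coe_finset]
  congr 1
  ext e
  simp [Finset.mem_sym2_iff, SimpleGraph.mem_edgeFinset]

lemma count_split {V : Type} [Fintype V] [DecidableEq V] (G : SimpleGraph V)
    [DecidableRel G.Adj] (T : Finset V) :
    edgeCount G T + nonEdgeCount G T = T.card.choose 2 := by
  haveI : DecidableRel Gᶜ.Adj := fun a b => decidable_of_iff _ (G.compl_adj a b).symm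
  rw [nonEdgeCount, edgeCount_eq_card, edgeCount_eq_card,
    ← Sym2.card_image_offDiag T, ← Finset.card_union_of_disjoint ?hd]
  · congr 1
    ext e
    induction e with
    | _ x y =>
      simp only [Finset.mem_union, Finset.mem_filter, SimpleGraph.mem_edgeFinset,
        SimpleGraph.mem_edgeSet, SimpleGraph.compl_adj, Finset.mem_image,
        Finset.mem_offDiag, Finset.mk_mem_sym2_iff, Function.uncurry_apply_pair, Sym2.eq_iff, Prod.exists]
      constructor
      · rintro (⟨ha, hx, hy⟩ | ⟨⟨hne, ha⟩, hx, hy⟩)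
        · exact ⟨x, y, ⟨hx, hy, ha.ne⟩, Or.inl ⟨rfl, rfl⟩⟩
        · exact ⟨x, y, ⟨hx, hy, hne⟩, Or.inl ⟨rfl, rfl⟩⟩
      · rintro ⟨a, b, ⟨haT, hbT, hab⟩, (⟨rfl, rfl⟩ | ⟨rfl, rfl⟩)⟩
        · by_cases h : G.Adj a b
          · exact Or.inl ⟨h, haT, hbT⟩
          · exact Or.inr ⟨⟨hab, h⟩, haT, hbT⟩
        · by_cases h : G.Adj b a
          · exact Or.inl ⟨h, hbT, haT⟩
          · exact Or.inr ⟨⟨hab.symm, h⟩, hbT, haT⟩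
  · rw [Finset.disjoint_left]
    intro e he1 he2
    rw [Finset.mem_filter, SimpleGraph.mem_edgeFinset] at he1 he2
    induction e with
    | _ x y =>
      rw [SimpleGraph.mem_edgeSet] at he1 he2
      exact (G.compl_adj x y).1 he2.1 |>.2 he1.1

lemma strictMono_fin_le {k : ℕ} (g : Fin k → ℕ) (hg : StrictMono g) :
    ∀ l : Fin k, (l : ℕ) ≤ g l := by
  have key : ∀ n (hn : n < k), n ≤ g ⟨n, hn⟩ := by
    intro n
    induction n with
    | zero => exact fun _ => Nat.zero_le _
    | succ m ih =>
      intro hn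
      have hm : m < k := Nat.lt_of_succ_lt hn
      have h1 : g ⟨m, hm⟩ < g ⟨m + 1, hn⟩ := hg (by simp [Fin.lt_def])
      have h2 := ih hm
      omega
  exact fun l => key l.1 l.2

lemma filter_lt_eq_image {M t : ℕ} (h : t ≤ M) :
    (Finset.univ.filter (fun p : Fin M => (p : ℕ) < t)) =
      (Finset.univ : Finset (Fin t)).image (Fin.castLE h) := by
  ext p
  simp only [Finset.mem_filter, Finset.mem_univ, true_and, Finset.mem_image]
  constructor
  · intro hp; exact ⟨⟨p, hp⟩, Fin.ext rfl⟩
  · rintro ⟨l, rfl⟩; exact l.isLt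

lemma sum_smallest_le {M : ℕ} (g : Fin M → ℕ) (hg : ∀ p q : Fin M, p ≤ q → g p ≤ g q)
    (B : Finset (Fin M)) :
    ∑ p ∈ Finset.univ.filter (fun p : Fin M => (p : ℕ) < B.card), g p ≤ ∑ b ∈ B, g b := by
  have hkM : B.card ≤ M := by
    simpa using Finset.card_le_univ B
  set k := B.card with hk
  have e := B.orderEmbOfFin hk.symm
  have hBimg : (Finset.univ : Finset (Fin k)).image (fun l => B.orderEmbOfFin hk.symm l) = B := by
    apply Finset.eq_of_subset_of_card_le
    · intro x hx
      simp only [Finset.mem_image] at hx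
      obtain ⟨l, -, rfl⟩ := hx
      exact Finset.orderEmbOfFin_mem B hk.symm l
    · rw [Finset.card_image_of_injective _ (B.orderEmbOfFin hk.symm).injective]
      simp [hk]
  calc ∑ p ∈ Finset.univ.filter (fun p : Fin M => (p : ℕ) < k), g p
      = ∑ l : Fin k, g (Fin.castLE hkM l) := by
        rw [filter_lt_eq_image hkM, Finset.sum_image]
        intro a _ b _ hab
        exact Fin.castLE_injective hkM hab
    _ ≤ ∑ l : Fin k, g (B.orderEmbOfFin hk.symm l) := by
        apply Finset.sum_le_sum
        intro l _
        apply hg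
        rw [Fin.le_def]
        exact strictMono_fin_le (fun l => ((B.orderEmbOfFin hk.symm l : Fin M) : ℕ))
          (fun a b hab => by exact_mod_cast (B.orderEmbOfFin hk.symm).strictMono hab) l
    _ = ∑ b ∈ B, g b := by
        conv_rhs => rw [← hBimg]
        rw [Finset.sum_image]
        intro a _ b _ hab
        exact (B.orderEmbOfFin hk.symm).injective hab

lemma sum_filter_lt_val {M t : ℕ} (h : t ≤ M) :
    ∑ l ∈ Finset.univ.filter (fun p : Fin M => (p : ℕ) < t), (l : ℕ) = t.choose 2 := by
  rw [filter_lt_eq_image h,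
    Finset.sum_image (fun a _ b _ hab => Fin.castLE_injective h hab)]
  simp only [Fin.coe_castLE]
  rw [Fin.sum_univ_eq_sum_range (fun i => i) t, Finset.sum_range_id, Nat.choose_two_right]


theorem stmt16 (f : ℕ → ℝ) (hf : ∀ i, f i ≤ (i.choose 2 : ℝ))
    {V : Type} [Fintype V] [DecidableEq V] (G : SimpleGraph V) [DecidableRel G.Adj]
    (S C : Finset V) (hdisj : Disjoint S C)
    (w : V → ℕ) (hw : ∀ v, w v = (S.filter fun x => ¬ G.Adj v x).card)
    (χ : ℕ) (P : Fin χ → Finset V)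
    (hPdisj : ∀ i j, i ≠ j → Disjoint (P i) (P j))
    (hPcover : C = Finset.univ.biUnion P)
    (hPind : ∀ i, ∀ x ∈ P i, ∀ y ∈ P i, ¬ G.Adj x y)
    (σ : Fin χ → ℕ) (R : (i : Fin χ) → Fin (σ i) → Finset V)
    (hRdisj : ∀ i, ∀ j j' : Fin (σ i), j ≠ j' → Disjoint (R i j) (R i j'))
    (hRcover : ∀ i, P i = Finset.univ.biUnion (R i))
    (hRfar : ∀ i j, ∀ x ∈ R i j, ∀ y ∈ R i j, x ≠ y →
      ¬ G.Adj x y ∧ ¬ ∃ z ∈ S ∪ C, G.Adj x z ∧ G.Adj z y)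
    (u : (i : Fin χ) → Fin (σ i) → V)
    (hu : ∀ i j, u i j ∈ R i j)
    (humin : ∀ i j, ∀ x ∈ R i j, w (u i j) ≤ w x)
    (husort : ∀ i, ∀ j j' : Fin (σ i), j ≤ j' → w (u i j) ≤ w (u i j'))
    (w' : (Σ i : Fin χ, Fin (σ i)) → ℕ)
    (hw' : ∀ p : Σ i : Fin χ, Fin (σ i), w' p = w (u p.1 p.2) + (p.2 : ℕ))
    (N : ℕ) (ord : Fin N ≃ Σ i : Fin χ, Fin (σ i))
    (hord : ∀ p q : Fin N, p ≤ q → w' (ord p) ≤ w' (ord q))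
    (W : ℕ → ℕ)
    (hW : ∀ k, W k = ∑ p ∈ Finset.univ.filter (fun p : Fin N => (p : ℕ) < k), w' (ord p))
    (kstar : ℕ) (hk1 : kstar ≤ N)
    (hk2 : (nonEdgeCount G S + W kstar : ℝ) ≤ gf f (S.card + kstar))
    (hk3 : ∀ k ≤ N, (nonEdgeCount G S + W k : ℝ) ≤ gf f (S.card + k) → k ≤ kstar) :
    ∀ T : Finset V, S ⊆ T → T ⊆ S ∪ C → f T.card ≤ (edgeCount G T : ℝ) →
      diamLE2 G T → T.card ≤ S.card + kstar := by
  classical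
  intro T hST hTSC hfT hdiam
  haveI : DecidableRel Gᶜ.Adj := fun a b => decidable_of_iff _ (G.compl_adj a b).symm
  set D := T \ S with hD
  have hDS : ∀ x ∈ D, x ∉ S := fun x hx => (Finset.mem_sdiff.1 hx).2
  have hDT : D ⊆ T := Finset.sdiff_subset
  have hDC : D ⊆ C := by
    intro x hx
    rcases Finset.mem_union.1 (hTSC (hDT hx)) with h | h
    · exact absurd h (hDS x hx)
    · exact h
  have hTcard : T.card = S.card + D.card := by
    have h := Finset.card_sdiff_add_card_eq_card hST
    rw [hD]
    omega
  -- D is partitioned by the color classes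
  have hDbi : D = Finset.univ.biUnion (fun i => D ∩ P i) := by
    ext x
    simp only [Finset.mem_biUnion, Finset.mem_univ, true_and, Finset.mem_inter]
    constructor
    · intro hx
      have hxC := hDC hx
      rw [hPcover] at hxC
      obtain ⟨i, -, hi⟩ := Finset.mem_biUnion.1 hxC
      exact ⟨i, hx, hi⟩
    · rintro ⟨i, hx, -⟩; exact hx
  have hPDdisj : ∀ (i : Fin χ), i ∈ (Finset.univ : Finset (Fin χ)) → ∀ (j : Fin χ),
      j ∈ (Finset.univ : Finset (Fin χ)) → i ≠ j → Disjoint (D ∩ P i) (D ∩ P j) :=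
    fun i _ j _ hij => (hPdisj i j hij).mono inter_subset_right inter_subset_right
  have hk_eq : D.card = ∑ i, (D ∩ P i).card := by
    conv_lhs => rw [hDbi]
    exact Finset.card_biUnion hPDdisj
  -- each R i j contains at most one vertex of D
  have hone : ∀ i j, (D ∩ R i j).card ≤ 1 := by
    intro i j
    rw [Finset.card_le_one]
    intro a ha b hb
    by_contra hab
    obtain ⟨ha1, ha2⟩ := Finset.mem_inter.1 ha
    obtain ⟨hb1, hb2⟩ := Finset.mem_inter.1 hb
    obtain ⟨hnadj, hno2⟩ := hRfar i j a ha2 b hb2 hab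
    rcases hdiam a (hDT ha1) b (hDT hb1) hab with h | ⟨z, hz, h1, h2⟩
    · exact hnadj h
    · exact hno2 ⟨z, hTSC hz, h1, h2⟩
  have hDPbi : ∀ i, D ∩ P i = Finset.univ.biUnion (fun j => D ∩ R i j) := by
    intro i
    ext x
    simp only [Finset.mem_inter, Finset.mem_biUnion, Finset.mem_univ, true_and]
    constructor
    · rintro ⟨hxD, hxP⟩
      rw [hRcover i] at hxP
      obtain ⟨j, -, hj⟩ := Finset.mem_biUnion.1 hxP
      exact ⟨j, hxD, hj⟩
    · rintro ⟨j, hxD, hxR⟩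
      refine ⟨hxD, ?_⟩
      rw [hRcover i]
      exact Finset.mem_biUnion.2 ⟨j, Finset.mem_univ _, hxR⟩
  have hRDdisj : ∀ i, ∀ (j : Fin (σ i)), j ∈ (Finset.univ : Finset (Fin (σ i))) →
      ∀ (j' : Fin (σ i)), j' ∈ (Finset.univ : Finset (Fin (σ i))) → j ≠ j' →
      Disjoint (D ∩ R i j) (D ∩ R i j') :=
    fun i j _ j' _ h => (hRdisj i j j' h).mono inter_subset_right inter_subset_right
  have htsum : ∀ i, (D ∩ P i).card = ∑ j, (D ∩ R i j).card := by
    intro i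
    conv_lhs => rw [hDPbi i]
    exact Finset.card_biUnion (hRDdisj i)
  have hBcard : ∀ i, (Finset.univ.filter (fun j => (D ∩ R i j).Nonempty)).card
      = (D ∩ P i).card := by
    intro i
    rw [htsum i, Finset.card_filter]
    refine (Finset.sum_congr rfl fun j _ => ?_).symm
    by_cases hj : (D ∩ R i j).Nonempty
    · rw [if_pos hj]
      exact Nat.le_antisymm (hone i j) (Finset.card_pos.2 hj)
    · rw [if_neg hj, Finset.not_nonempty_iff_eq_empty.1 hj, Finset.card_empty]
  have htσ : ∀ i, (D ∩ P i).card ≤ σ i := by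
    intro i
    rw [← hBcard i]
    simpa using Finset.card_le_univ (Finset.univ.filter (fun j => (D ∩ R i j).Nonempty))
  -- per-color selection bound
  have hcolor : ∀ i,
      ∑ l ∈ Finset.univ.filter (fun l : Fin (σ i) => (l : ℕ) < (D ∩ P i).card), w (u i l)
      ≤ ∑ x ∈ D ∩ P i, w x := by
    intro i
    have hs := sum_smallest_le (fun l => w (u i l)) (fun p q h => husort i p q h)
      (Finset.univ.filter (fun j => (D ∩ R i j).Nonempty))
    rw [hBcard i] at hs
    refine hs.trans ?_
    calc ∑ j ∈ Finset.univ.filter (fun j => (D ∩ R i j).Nonempty), w (u i j)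
        ≤ ∑ j ∈ Finset.univ.filter (fun j => (D ∩ R i j).Nonempty), ∑ x ∈ D ∩ R i j, w x := by
          refine Finset.sum_le_sum fun j hj => ?_
          obtain ⟨x, hx⟩ := (Finset.mem_filter.1 hj).2
          exact le_trans (humin i j x (Finset.mem_inter.1 hx).2)
            (Finset.single_le_sum (fun _ _ => Nat.zero_le _) hx)
      _ ≤ ∑ j, ∑ x ∈ D ∩ R i j, w x :=
          Finset.sum_le_sum_of_subset (Finset.filter_subset _ _)
      _ = ∑ x ∈ D ∩ P i, w x := by
          conv_rhs => rw [hDPbi i]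
          exact (Finset.sum_biUnion (hRDdisj i)).symm
  -- global selection bound
  have hSelcard : (Finset.univ.sigma
      (fun i => Finset.univ.filter (fun l : Fin (σ i) => (l : ℕ) < (D ∩ P i).card))).card
      = D.card := by
    rw [Finset.card_sigma, hk_eq]
    refine Finset.sum_congr rfl fun i _ => ?_
    rw [filter_lt_eq_image (htσ i),
      Finset.card_image_of_injective _ (Fin.castLE_injective _)]
    simp
  have hAcard : ((Finset.univ.sigma
      (fun i => Finset.univ.filter (fun l : Fin (σ i) => (l : ℕ) < (D ∩ P i).card))).image
      ord.symm).card = D.card := by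
    rw [Finset.card_image_of_injective _ ord.symm.injective, hSelcard]
  have hkN : D.card ≤ N := by
    have h := Finset.card_le_univ ((Finset.univ.sigma
      (fun i => Finset.univ.filter (fun l : Fin (σ i) => (l : ℕ) < (D ∩ P i).card))).image
      ord.symm)
    rw [hAcard] at h
    simpa using h
  have hWk : W D.card ≤ ∑ x ∈ D, w x + ∑ i, ((D ∩ P i).card).choose 2 := by
    rw [hW D.card]
    calc ∑ p ∈ Finset.univ.filter (fun p : Fin N => (p : ℕ) < D.card), w' (ord p)
        ≤ ∑ p ∈ (Finset.univ.sigma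
            (fun i => Finset.univ.filter (fun l : Fin (σ i) => (l : ℕ) < (D ∩ P i).card))).image
            ord.symm, w' (ord p) := by
          have hs := sum_smallest_le (fun p => w' (ord p)) (fun p q h => hord p q h)
            ((Finset.univ.sigma
            (fun i => Finset.univ.filter (fun l : Fin (σ i) => (l : ℕ) < (D ∩ P i).card))).image
            ord.symm)
          rwa [hAcard] at hs
      _ = ∑ q ∈ Finset.univ.sigma
            (fun i => Finset.univ.filter (fun l : Fin (σ i) => (l : ℕ) < (D ∩ P i).card)),
            w' q := by
          rw [Finset.sum_image (fun a _ b _ h => ord.symm.injective h)]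
          simp
      _ = ∑ i, ∑ l ∈ Finset.univ.filter (fun l : Fin (σ i) => (l : ℕ) < (D ∩ P i).card),
            w' ⟨i, l⟩ := by
          rw [Finset.sum_sigma]
      _ = ∑ i, (∑ l ∈ Finset.univ.filter (fun l : Fin (σ i) => (l : ℕ) < (D ∩ P i).card),
            w (u i l) + ((D ∩ P i).card).choose 2) := by
          refine Finset.sum_congr rfl fun i _ => ?_
          rw [← sum_filter_lt_val (htσ i), ← Finset.sum_add_distrib]
          exact Finset.sum_congr rfl fun l _ => hw' ⟨i, l⟩
      _ ≤ ∑ i, (∑ x ∈ D ∩ P i, w x + ((D ∩ P i).card).choose 2) :=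
          Finset.sum_le_sum fun i _ => Nat.add_le_add_right (hcolor i) _
      _ = ∑ x ∈ D, w x + ∑ i, ((D ∩ P i).card).choose 2 := by
          rw [Finset.sum_add_distrib]
          congr 1
          conv_rhs => rw [hDbi]
          exact (Finset.sum_biUnion hPDdisj).symm
  -- the counting inequality
  have hmemEA : ∀ e ∈ D.biUnion
      (fun v => (S.filter (fun x => ¬ G.Adj v x)).image (fun x => s(v, x))),
      ∃ v x, v ∈ D ∧ x ∈ S ∧ ¬ G.Adj v x ∧ e = s(v, x) := by
    intro e he
    obtain ⟨v, hv, he⟩ := Finset.mem_biUnion.1 he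
    obtain ⟨x, hx, rfl⟩ := Finset.mem_image.1 he
    obtain ⟨hxS, hxadj⟩ := Finset.mem_filter.1 hx
    exact ⟨v, x, hv, hxS, hxadj, rfl⟩
  have hmemEB : ∀ e ∈ Finset.univ.biUnion (fun i => ((D ∩ P i).offDiag.image (Function.uncurry Sym2.mk))),
      ∃ i a b, a ∈ D ∩ P i ∧ b ∈ D ∩ P i ∧ a ≠ b ∧ e = s(a, b) := by
    intro e he
    obtain ⟨i, -, he⟩ := Finset.mem_biUnion.1 he
    obtain ⟨⟨a, b⟩, hab, rfl⟩ := Finset.mem_image.1 he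
    obtain ⟨ha, hb, hne⟩ := Finset.mem_offDiag.1 hab
    exact ⟨i, a, b, ha, hb, hne, rfl⟩
  have hEAcard : (D.biUnion
      (fun v => (S.filter (fun x => ¬ G.Adj v x)).image (fun x => s(v, x)))).card
      = ∑ v ∈ D, w v := by
    rw [Finset.card_biUnion]
    · refine Finset.sum_congr rfl fun v hv => ?_
      rw [hw v]
      apply Finset.card_image_of_injOn
      intro x hx y hy hxy
      rcases Sym2.eq_iff.1 hxy with ⟨-, h⟩ | ⟨h1, h2⟩
      · exact h
      · exact absurd (h1 ▸ (Finset.mem_filter.1 hy).1) (hDS v hv)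
    · intro v hv v' hv' hvv'
      rw [Function.onFun, Finset.disjoint_left]
      rintro e he he'
      obtain ⟨x, hx, rfl⟩ := Finset.mem_image.1 he
      obtain ⟨x', hx', hee⟩ := Finset.mem_image.1 he'
      rcases Sym2.eq_iff.1 hee with ⟨h1, -⟩ | ⟨h1, h2⟩
      · exact hvv' h1.symm
      · refine hDS v hv ?_
        rw [← h2]
        exact (Finset.mem_filter.1 hx').1
  have hEBcard : (Finset.univ.biUnion (fun i => ((D ∩ P i).offDiag.image (Function.uncurry Sym2.mk)))).card
      = ∑ i, ((D ∩ P i).card).choose 2 := by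
    rw [Finset.card_biUnion]
    · exact Finset.sum_congr rfl fun i _ => Sym2.card_image_offDiag _
    · intro i _ i' _ hii'
      rw [Function.onFun, Finset.disjoint_left]
      rintro e he he'
      obtain ⟨⟨a, b⟩, hab, rfl⟩ := Finset.mem_image.1 he
      obtain ⟨⟨a', b'⟩, hab', hee⟩ := Finset.mem_image.1 he'
      obtain ⟨ha, hb, -⟩ := Finset.mem_offDiag.1 hab
      obtain ⟨ha', hb', -⟩ := Finset.mem_offDiag.1 hab'
      have haP : a ∈ P i := (Finset.mem_inter.1 ha).2
      rcases Sym2.eq_iff.1 hee with ⟨h1, -⟩ | ⟨-, h2⟩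
      · refine Finset.disjoint_left.1 (hPdisj i i' hii') haP ?_
        rw [h1] at ha'
        exact (Finset.mem_inter.1 ha').2
      · refine Finset.disjoint_left.1 (hPdisj i i' hii') haP ?_
        rw [h2] at hb'
        exact (Finset.mem_inter.1 hb').2
  have hE0mem : ∀ e ∈ Gᶜ.edgeFinset.filter (· ∈ S.sym2), ∀ x ∈ e, x ∈ S := by
    intro e he
    exact Finset.mem_sym2_iff.1 (Finset.mem_filter.1 he).2
  have hd1 : Disjoint (Gᶜ.edgeFinset.filter (· ∈ S.sym2))
      (D.biUnion (fun v => (S.filter (fun x => ¬ G.Adj v x)).image (fun x => s(v, x)))) := by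
    rw [Finset.disjoint_left]
    intro e he0 heA
    obtain ⟨v, x, hv, -, -, rfl⟩ := hmemEA e heA
    exact hDS v hv (hE0mem _ he0 v (Sym2.mem_mk_left v x))
  have hd2 : Disjoint (Gᶜ.edgeFinset.filter (· ∈ S.sym2))
      (Finset.univ.biUnion (fun i => ((D ∩ P i).offDiag.image (Function.uncurry Sym2.mk)))) := by
    rw [Finset.disjoint_left]
    intro e he0 heB
    obtain ⟨i, a, b, ha, -, -, rfl⟩ := hmemEB e heB
    exact hDS a (Finset.mem_inter.1 ha).1 (hE0mem _ he0 a (Sym2.mem_mk_left a b))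
  have hd3 : Disjoint
      (D.biUnion (fun v => (S.filter (fun x => ¬ G.Adj v x)).image (fun x => s(v, x))))
      (Finset.univ.biUnion (fun i => ((D ∩ P i).offDiag.image (Function.uncurry Sym2.mk)))) := by
    rw [Finset.disjoint_left]
    intro e heA heB
    obtain ⟨v, x, hv, hxS, -, rfl⟩ := hmemEA e heA
    obtain ⟨i, a, b, ha, hb, -, hee⟩ := hmemEB _ heB
    have hx : x ∈ s(a, b) := hee ▸ Sym2.mem_mk_right v x
    rcases Sym2.mem_iff.1 hx with h | h
    · exact hDS a (Finset.mem_inter.1 ha).1 (h ▸ hxS)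
    · exact hDS b (Finset.mem_inter.1 hb).1 (h ▸ hxS)
  have hsub : (Gᶜ.edgeFinset.filter (· ∈ S.sym2))
      ∪ (D.biUnion (fun v => (S.filter (fun x => ¬ G.Adj v x)).image (fun x => s(v, x))))
      ∪ (Finset.univ.biUnion (fun i => ((D ∩ P i).offDiag.image (Function.uncurry Sym2.mk))))
      ⊆ Gᶜ.edgeFinset.filter (· ∈ T.sym2) := by
    intro e he
    rcases Finset.mem_union.1 he with he | heB
    · rcases Finset.mem_union.1 he with he0 | heA
      · obtain ⟨h1, h2⟩ := Finset.mem_filter.1 he0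
        exact Finset.mem_filter.2 ⟨h1, Finset.sym2_mono hST h2⟩
      · obtain ⟨v, x, hv, hxS, hnadj, rfl⟩ := hmemEA e heA
        refine Finset.mem_filter.2 ⟨?_, ?_⟩
        · rw [SimpleGraph.mem_edgeFinset, SimpleGraph.mem_edgeSet, SimpleGraph.compl_adj]
          exact ⟨fun h => hDS v hv (h ▸ hxS), hnadj⟩
        · rw [Finset.mk_mem_sym2_iff]
          exact ⟨hDT hv, hST hxS⟩
    · obtain ⟨i, a, b, ha, hb, hab, rfl⟩ := hmemEB e heB
      refine Finset.mem_filter.2 ⟨?_, ?_⟩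
      · rw [SimpleGraph.mem_edgeFinset, SimpleGraph.mem_edgeSet, SimpleGraph.compl_adj]
        exact ⟨hab, hPind i a (Finset.mem_inter.1 ha).2 b (Finset.mem_inter.1 hb).2⟩
      · rw [Finset.mk_mem_sym2_iff]
        exact ⟨hDT (Finset.mem_inter.1 ha).1, hDT (Finset.mem_inter.1 hb).1⟩
  have hcount : nonEdgeCount G S + (∑ v ∈ D, w v + ∑ i, ((D ∩ P i).card).choose 2)
      ≤ nonEdgeCount G T := by
    have h1 : nonEdgeCount G T = (Gᶜ.edgeFinset.filter (· ∈ T.sym2)).card :=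
      edgeCount_eq_card _ _
    have h0 : nonEdgeCount G S = (Gᶜ.edgeFinset.filter (· ∈ S.sym2)).card :=
      edgeCount_eq_card _ _
    rw [h1, h0, ← hEAcard, ← hEBcard, ← add_assoc,
      ← Finset.card_union_of_disjoint hd1,
      ← Finset.card_union_of_disjoint (Finset.disjoint_union_left.2 ⟨hd2, hd3⟩)]
    exact Finset.card_le_card hsub
  -- final arithmetic
  have hsplit := count_split G T
  have hTle : (nonEdgeCount G T : ℝ) ≤ gf f T.card := by
    rw [gf]
    have hc : (edgeCount G T : ℝ) + (nonEdgeCount G T : ℝ) = (T.card.choose 2 : ℝ) := by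
      exact_mod_cast congrArg (Nat.cast : ℕ → ℝ) hsplit
    linarith
  have hfin : (nonEdgeCount G S + W D.card : ℝ) ≤ gf f (S.card + D.card) := by
    rw [← hTcard]
    refine le_trans ?_ hTle
    have h2 : nonEdgeCount G S + W D.card ≤ nonEdgeCount G T :=
      le_trans (Nat.add_le_add_left hWk _) hcount
    exact_mod_cast h2
  have hfinal := hk3 D.card hkN hfin
  omega
end
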